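/- Assume (H-1). Let θ with k hidden units and θ' with k' hidden units both be minimal parameters, i.e. all aᵢ ≠ 0 and the pairs (bᵢ, wᵢ) pairwise distinct, and likewise all a'ᵢ ≠ 0 and (b'ᵢ, w'ᵢ) pairwise distinct. If F_θ(x) = F_{θ'}(x) for all x ∈ ℝ^d, then k = k', β = β', and there exists a permutation σ of {1,…,k} such that aᵢ = a'_{σ(i)}, bᵢ = b'_{σ(i)} and wᵢ = w'_{σ(i)} for all i. Hence the minimal representation of an MLP regression function is unique up to permutation of the hidden units. -/
import Mathlib


open Finset
open scoped RealInnerProductSpace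

/-- The MLP regression function with `k` hidden units:
`F_θ(x) = β + Σ_{i=1}^k aᵢ φ(bᵢ + wᵢᵀ x)`. -/
noncomputable def mlpF {d : ℕ} (φ : ℝ → ℝ) (k : ℕ) (β : ℝ) (a b : Fin k → ℝ)
    (w : Fin k → EuclideanSpace ℝ (Fin d)) (x : EuclideanSpace ℝ (Fin d)) : ℝ :=
  β + ∑ i, a i * φ (b i + ⟪w i, x⟫)

open Classical in
/-- `Σ_{i : (bᵢ,wᵢ) = (bv,wv)} aᵢ`, the total output weight attached to the
hidden-unit atom `(bv, wv)`. -/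
noncomputable def atomSum {d : ℕ} (k : ℕ) (a b : Fin k → ℝ)
    (w : Fin k → EuclideanSpace ℝ (Fin d)) (bv : ℝ)
    (wv : EuclideanSpace ℝ (Fin d)) : ℝ :=
  ∑ i ∈ Finset.univ.filter (fun i => b i = bv ∧ w i = wv), a i

/-- under (H-1), two minimal parameters (all output weights nonzero,
pairwise distinct hidden-unit atoms) realizing the same regression function have the
same number of hidden units, the same bias, and coincide up to a permutation of the
hidden units. -/
theorem minimal_representation_unique_up_to_permutation {d : ℕ} (φ : ℝ → ℝ)
    (hH1 : ∀ (k k' : ℕ) (β β' : ℝ) (a b : Fin k → ℝ)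
      (w : Fin k → EuclideanSpace ℝ (Fin d)) (a' b' : Fin k' → ℝ)
      (w' : Fin k' → EuclideanSpace ℝ (Fin d)),
      (∀ x, mlpF φ k' β' a' b' w' x = mlpF φ k β a b w x) ↔
        (β' = β ∧ ∀ (bv : ℝ) (wv : EuclideanSpace ℝ (Fin d)),
          atomSum k' a' b' w' bv wv = atomSum k a b w bv wv))
    (k k' : ℕ) (β β' : ℝ)
    (a b : Fin k → ℝ) (w : Fin k → EuclideanSpace ℝ (Fin d))
    (a' b' : Fin k' → ℝ) (w' : Fin k' → EuclideanSpace ℝ (Fin d))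
    (ha : ∀ i, a i ≠ 0) (hdist : Function.Injective (fun i => (b i, w i)))
    (ha' : ∀ i, a' i ≠ 0) (hdist' : Function.Injective (fun i => (b' i, w' i)))
    (heq : ∀ x, mlpF φ k β a b w x = mlpF φ k' β' a' b' w' x) :
    k = k' ∧ β = β' ∧
      ∃ e : Fin k ≃ Fin k',
        ∀ i, a i = a' (e i) ∧ b i = b' (e i) ∧ w i = w' (e i) := by
  classical
  obtain ⟨hβ, hatom⟩ := (hH1 k k' β β' a b w a' b' w').mp (fun x => (heq x).symm)
  have hself : ∀ i : Fin k, atomSum k a b w (b i) (w i) = a i := by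
    intro i
    have hf : Finset.univ.filter (fun j => b j = b i ∧ w j = w i) = {i} := by
      ext j
      simp only [Finset.mem_filter, Finset.mem_univ, true_and, Finset.mem_singleton]
      constructor
      · rintro ⟨h1, h2⟩; exact hdist (by simp [h1, h2])
      · rintro rfl; exact ⟨rfl, rfl⟩
    simp [atomSum, hf]
  have hself' : ∀ j : Fin k', atomSum k' a' b' w' (b' j) (w' j) = a' j := by
    intro j
    have hf : Finset.univ.filter (fun i => b' i = b' j ∧ w' i = w' j) = {j} := by
      ext i
      simp only [Finset.mem_filter, Finset.mem_univ, true_and, Finset.mem_singleton]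
      constructor
      · rintro ⟨h1, h2⟩; exact hdist' (by simp [h1, h2])
      · rintro rfl; exact ⟨rfl, rfl⟩
    simp [atomSum, hf]
  have hf : ∀ i : Fin k, ∃ j : Fin k', b' j = b i ∧ w' j = w i := by
    intro i
    by_contra hno
    push_neg at hno
    have hz : atomSum k' a' b' w' (b i) (w i) = 0 := by
      have : Finset.univ.filter (fun j => b' j = b i ∧ w' j = w i) = ∅ := by
        apply Finset.filter_eq_empty_iff.mpr
        intro j _ h
        exact hno j h.1 h.2
      simp [atomSum, this]
    have := hatom (b i) (w i)
    rw [hz, hself i] at this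
    exact ha i this.symm
  have hg : ∀ j : Fin k', ∃ i : Fin k, b i = b' j ∧ w i = w' j := by
    intro j
    by_contra hno
    push_neg at hno
    have hz : atomSum k a b w (b' j) (w' j) = 0 := by
      have : Finset.univ.filter (fun i => b i = b' j ∧ w i = w' j) = ∅ := by
        apply Finset.filter_eq_empty_iff.mpr
        intro i _ h
        exact hno i h.1 h.2
      simp [atomSum, this]
    have := hatom (b' j) (w' j)
    rw [hz, hself' j] at this
    exact ha' j this
  choose f hfb hfw using hf
  choose g hgb hgw using hg
  have hgf : ∀ i, g (f i) = i := by
    intro i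
    apply hdist
    simp only
    rw [Prod.ext_iff]
    exact ⟨by rw [hgb, hfb], by rw [hgw, hfw]⟩
  have hfg : ∀ j, f (g j) = j := by
    intro j
    apply hdist'
    simp only
    rw [Prod.ext_iff]
    exact ⟨by rw [hfb, hgb], by rw [hfw, hgw]⟩
  let e : Fin k ≃ Fin k' := ⟨f, g, hgf, hfg⟩
  have hk : k = k' := by
    have := Fintype.card_congr e
    simpa using this
  refine ⟨hk, hβ.symm, e, fun i => ?_⟩
  have hb : b i = b' (e i) := (hfb i).symm
  have hw : w i = w' (e i) := (hfw i).symm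
  refine ⟨?_, hb, hw⟩
  have := hatom (b i) (w i)
  rw [hself i] at this
  rw [← this, hb, hw]
  exact hself' (e i)
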